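/- (Polynomial perturbation estimate of Subsection 5.3.4.) Assume [A1], [A2], λ > 0, q > 0, and set E[C] := ∫₀^∞ y dF(y) < ∞. Let x^max > 0, ε > 0. Let φ : ℝ → ℝ be differentiable almost everywhere with 𝓛^u φ(y) ≤ 0 for almost every y ∈ [0, x^max] and every u ∈ 𝓡, and let φ̃ : ℝ → ℝ be C¹ with |φ̃(z) − φ(z)| ≤ ε·|z| for all z ≤ x^max and |φ̃'(y) − φ'(y)| ≤ ε for almost every y ∈ [0, x^max]. Then, setting C := (([p]₁ + 2λ + q)·x^max + λ·E[C] + ‖p‖₀)/q, one has 𝓛^u φ̃(y) ≤ q·C·ε, and consequently 𝓛^u (φ̃ + C·ε)(y) ≤ 0, for almost every y ∈ [0, x^max] and every u ∈ 𝓡. -/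

import Mathlib

open MeasureTheory Set Real Filter

noncomputable section

/-- A retention (reinsurance) policy: a Borel measurable function `u` with
`0 ≤ u y ≤ y` for all `y ≥ 0`. -/
def IsRetention (u : ℝ → ℝ) : Prop :=
  Measurable u ∧ ∀ y : ℝ, 0 ≤ y → 0 ≤ u y ∧ u y ≤ y

/-- The inner supremum `sup_{0 ≤ y ≤ z} |p(y,x) − p(y,x')|` appearing in `[p]₁`. -/
def supDiff (p : ℝ → ℝ → ℝ) (x x' z : ℝ) : ℝ :=
  sSup ((fun y => |p y x - p y x'|) '' Icc 0 z)

/-- Assumption [A1]: `p ≥ 0` and `p` is non-decreasing in each argument on `[0,∞)`. -/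
def AssumptionA1 (p : ℝ → ℝ → ℝ) : Prop :=
  (∀ y x : ℝ, 0 ≤ y → 0 ≤ x → 0 ≤ p y x) ∧
  (∀ x : ℝ, 0 ≤ x → MonotoneOn (fun y => p y x) (Ici 0)) ∧
  (∀ y : ℝ, 0 ≤ y → MonotoneOn (fun x => p y x) (Ici 0))

/-- Assumption [A2], with the real constant `P1` standing for the finite quantity `[p]₁`:
`p` is (jointly) measurable, uniformly continuous on `[0,∞)²`,
`‖p‖₀ = ∫ p(y,0) dF(y)` is finite, and the defining bound of `[p]₁` holds. -/
def AssumptionA2 (F : Measure ℝ) (p : ℝ → ℝ → ℝ) (P1 : ℝ) : Prop :=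
  Measurable (fun z : ℝ × ℝ => p z.1 z.2) ∧
  UniformContinuousOn (fun z : ℝ × ℝ => p z.1 z.2) (Ici 0 ×ˢ Ici 0) ∧
  Integrable (fun y => p y 0) F ∧
  0 ≤ P1 ∧
  (∀ x x' : ℝ, 0 ≤ x → 0 ≤ x' → Integrable (fun z => supDiff p x x' z) F) ∧
  (∀ x x' : ℝ, 0 ≤ x → 0 ≤ x' → (∫ z, supDiff p x x' z ∂F) ≤ P1 * |x - x'|)

/-- The generator `𝓛^u ψ(x) = p^u(x) ψ'(x) + λ ∫ ψ(x − u(y)) dF(y) − (λ+q) ψ(x)`,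
where `ψ'` denotes an (a.e.) derivative of `ψ`. -/
def gen (F : MeasureTheory.Measure ℝ) (p : ℝ → ℝ → ℝ) (lam q : ℝ) (u : ℝ → ℝ)
    (ψ ψ' : ℝ → ℝ) (x : ℝ) : ℝ :=
  (∫ y, p (u y) x ∂F) * ψ' x + lam * (∫ y, ψ (x - u y) ∂F) - (lam + q) * ψ x

/-! The estimate is a term-by-term comparison of `𝓛^u φ̃` with `𝓛^u φ ≤ 0`. The premium
`p^u(y) ≤ ‖p‖₀ + [p]₁ y` multiplies the derivative error `ε`; the jump term differs by at most
`λ ε (x^max + E[C])`, since `|y − u(y')| ≤ x^max + y'`; and the value term by `(λ + q) ε x^max`.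
Adding the constant `Cε ≥ 0` then lowers the generator by exactly `q C ε`, because `F` has mass one. -/

section Integral

variable {α : Type*} [MeasurableSpace α] {μ : Measure α}

/-- Unlike `integral_sub`, no integrability of `f` or `g` is assumed: when they are not
integrable both integrals are junk `0`, and the bound survives because `h ≥ 0` a.e. -/
lemma integral_sub_integral_le_of_abs_sub_le {f g h : α → ℝ}
    (hfg : AEStronglyMeasurable (fun x => f x - g x) μ) (hh : Integrable h μ)
    (hbound : ∀ᵐ x ∂μ, |f x - g x| ≤ h x) :
    ∫ x, f x ∂μ - ∫ x, g x ∂μ ≤ ∫ x, h x ∂μ := by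
  have hint : Integrable (fun x => f x - g x) μ :=
    hh.mono' hfg (by simpa only [Real.norm_eq_abs] using hbound)
  by_cases hg : Integrable g μ
  · have hf : Integrable f μ := (hint.add hg).congr (.of_forall fun x => by simp)
    rw [← integral_sub hf hg]
    exact integral_mono_ae hint hh (hbound.mono fun x hx => (le_abs_self _).trans hx)
  · have hf : ¬Integrable f μ := fun hf => hg ((hf.sub hint).congr (.of_forall fun x => by simp))
    rw [integral_undef hf, integral_undef hg, sub_zero]
    exact integral_nonneg_of_ae (hbound.mono fun x hx => (abs_nonneg _).trans hx)

end Integral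

lemma abs_sub_le_supDiff {p : ℝ → ℝ → ℝ}
    (hp : ContinuousOn (fun z : ℝ × ℝ => p z.1 z.2) (Ici 0 ×ˢ Ici 0))
    {x x' z w : ℝ} (hx : 0 ≤ x) (hx' : 0 ≤ x') (hw : w ∈ Icc 0 z) :
    |p w x - p w x'| ≤ supDiff p x x' z := by
  have hcont : ∀ v, 0 ≤ v → ContinuousOn (fun w => p w v) (Icc 0 z) := fun v hv =>
    hp.comp (continuous_id.prodMk continuous_const).continuousOn fun w hw => ⟨hw.1, hv⟩
  have hbdd : BddAbove ((fun w => |p w x - p w x'|) '' Icc 0 z) :=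
    (isCompact_Icc.image_of_continuousOn ((hcont x hx).sub (hcont x' hx')).abs).bddAbove
  exact le_csSup hbdd ⟨w, hw, rfl⟩

section Premium

variable {F : Measure ℝ} {p : ℝ → ℝ → ℝ} {P1 : ℝ} {u : ℝ → ℝ} {y : ℝ}

lemma premium_le_add_supDiff (hA1 : AssumptionA1 p) (hA2 : AssumptionA2 F p P1)
    (hu : IsRetention u) (hy : 0 ≤ y) {y' : ℝ} (hy' : 0 ≤ y') :
    p (u y') y ≤ p y' 0 + supDiff p y 0 y' := by
  obtain ⟨hu0, huy⟩ := hu.2 y' hy'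
  have hjump : p (u y') y - p (u y') 0 ≤ supDiff p y 0 y' :=
    (le_abs_self _).trans (abs_sub_le_supDiff hA2.2.1.continuousOn hy le_rfl ⟨hu0, huy⟩)
  have hmono : p (u y') 0 ≤ p y' 0 := hA1.2.1 0 le_rfl hu0 hy' huy
  linarith

lemma integral_premium_nonneg (hF0 : ∀ᵐ y' ∂F, 0 ≤ y') (hA1 : AssumptionA1 p)
    (hu : IsRetention u) (hy : 0 ≤ y) :
    0 ≤ ∫ y', p (u y') y ∂F :=
  integral_nonneg_of_ae (hF0.mono fun y' hy' => hA1.1 _ _ (hu.2 y' hy').1 hy)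

lemma integrable_premium (hF0 : ∀ᵐ y' ∂F, 0 ≤ y') (hA1 : AssumptionA1 p)
    (hA2 : AssumptionA2 F p P1) (hu : IsRetention u) (hy : 0 ≤ y) :
    Integrable (fun y' => p (u y') y) F := by
  refine (hA2.2.2.1.add (hA2.2.2.2.2.1 y 0 hy le_rfl)).mono'
    (hA2.1.comp (hu.1.prodMk measurable_const)).aestronglyMeasurable ?_
  filter_upwards [hF0] with y' hy'
  rw [Real.norm_eq_abs, abs_of_nonneg (hA1.1 _ _ (hu.2 y' hy').1 hy)]
  exact premium_le_add_supDiff hA1 hA2 hu hy hy'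

lemma integral_premium_le (hF0 : ∀ᵐ y' ∂F, 0 ≤ y') (hA1 : AssumptionA1 p)
    (hA2 : AssumptionA2 F p P1) (hu : IsRetention u) (hy : 0 ≤ y) :
    ∫ y', p (u y') y ∂F ≤ ∫ y', p y' 0 ∂F + P1 * y := by
  have hsup := hA2.2.2.2.2.1 y 0 hy le_rfl
  calc ∫ y', p (u y') y ∂F ≤ ∫ y', (p y' 0 + supDiff p y 0 y') ∂F :=
        integral_mono_ae (integrable_premium hF0 hA1 hA2 hu hy) (hA2.2.2.1.add hsup)
          (hF0.mono fun y' hy' => premium_le_add_supDiff hA1 hA2 hu hy hy')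
    _ = ∫ y', p y' 0 ∂F + ∫ y', supDiff p y 0 y' ∂F := integral_add hA2.2.2.1 hsup
    _ ≤ ∫ y', p y' 0 ∂F + P1 * y := by
        have h := hA2.2.2.2.2.2 y 0 hy le_rfl
        rw [sub_zero, abs_of_nonneg hy] at h
        linarith

end Premium

section Generator

variable {F : Measure ℝ} {p : ℝ → ℝ → ℝ} {lam q : ℝ} {u : ℝ → ℝ} {y : ℝ}

lemma integral_comp_sub_retention_sub_le [IsProbabilityMeasure F]
    (hF0 : ∀ᵐ y' ∂F, 0 ≤ y') (hmean : Integrable (fun y' : ℝ => y') F)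
    {φ φt : ℝ → ℝ} (hφ : Measurable φ) (hφt : Measurable φt) {ε xmax : ℝ} (hε : 0 ≤ ε)
    (hclose : ∀ z : ℝ, z ≤ xmax → |φt z - φ z| ≤ ε * |z|)
    (hu : IsRetention u) (hy : y ∈ Icc 0 xmax) :
    ∫ y', φt (y - u y') ∂F - ∫ y', φ (y - u y') ∂F ≤ ε * (xmax + ∫ y', y' ∂F) := by
  have hshift : Measurable fun y' => y - u y' := measurable_const.sub hu.1
  have hbound : ∀ᵐ y' ∂F, |φt (y - u y') - φ (y - u y')| ≤ ε * (xmax + y') := by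
    filter_upwards [hF0] with y' hy'
    obtain ⟨hu0, huy⟩ := hu.2 y' hy'
    calc |φt (y - u y') - φ (y - u y')| ≤ ε * |y - u y'| := hclose _ (by linarith [hy.2])
      _ ≤ ε * (xmax + y') := by
          gcongr
          rw [abs_le]
          constructor <;> linarith [hy.1, hy.2]
  calc ∫ y', φt (y - u y') ∂F - ∫ y', φ (y - u y') ∂F ≤ ∫ y', ε * (xmax + y') ∂F :=
        integral_sub_integral_le_of_abs_sub_le
          ((hφt.comp hshift).sub (hφ.comp hshift)).aestronglyMeasurable
          (((integrable_const xmax).add hmean).const_mul ε) hbound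
    _ = ε * (xmax + ∫ y', y' ∂F) := by
        rw [integral_const_mul, integral_add (integrable_const xmax) hmean, integral_const]
        simp

lemma gen_le_gen_add (hlam : 0 ≤ lam) (hq : 0 ≤ q) {ψ ψ' χ χ' : ℝ → ℝ} {a b c K : ℝ}
    (ha : 0 ≤ a) (hI : 0 ≤ ∫ y', p (u y') y ∂F) (hIK : ∫ y', p (u y') y ∂F ≤ K)
    (hderiv : ψ' y - χ' y ≤ a)
    (hjump : ∫ y', ψ (y - u y') ∂F - ∫ y', χ (y - u y') ∂F ≤ b)
    (hval : χ y - ψ y ≤ c) :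
    gen F p lam q u ψ ψ' y ≤ gen F p lam q u χ χ' y + K * a + lam * b + (lam + q) * c := by
  have h₁ := mul_le_mul_of_nonneg_left hderiv hI
  have h₂ := mul_le_mul_of_nonneg_right hIK ha
  have h₃ := mul_le_mul_of_nonneg_left hjump hlam
  have h₄ := mul_le_mul_of_nonneg_left hval (add_nonneg hlam hq)
  simp only [gen]
  linarith

lemma gen_add_const_le [IsProbabilityMeasure F] (hlam : 0 ≤ lam) {ψ ψ' : ℝ → ℝ} {c : ℝ}
    (hc : 0 ≤ c) :
    gen F p lam q u (fun z => ψ z + c) ψ' y ≤ gen F p lam q u ψ ψ' y - q * c := by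
  have hjump : ∫ y', (ψ (y - u y') + c) ∂F - ∫ y', ψ (y - u y') ∂F ≤ ∫ _, c ∂F :=
    integral_sub_integral_le_of_abs_sub_le
      (by simpa only [add_sub_cancel_left] using aestronglyMeasurable_const)
      (integrable_const c) (.of_forall fun _ => by simp [abs_of_nonneg hc])
  have h := mul_le_mul_of_nonneg_left hjump hlam
  simp only [integral_const, probReal_univ, one_smul] at h
  simp only [gen]
  linarith

lemma gen_le_of_close [IsProbabilityMeasure F] (hF0 : ∀ᵐ y' ∂F, 0 ≤ y')
    (hmean : Integrable (fun y' : ℝ => y') F) {P1 : ℝ} (hA1 : AssumptionA1 p)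
    (hA2 : AssumptionA2 F p P1) (hlam : 0 ≤ lam) (hq : 0 ≤ q)
    {φ φd φt φt' : ℝ → ℝ} (hφ : Measurable φ) (hφt : Measurable φt) {xmax ε : ℝ}
    (hclose : ∀ z : ℝ, z ≤ xmax → |φt z - φ z| ≤ ε * |z|) (hd : |φt' y - φd y| ≤ ε)
    (hu : IsRetention u) (hy : y ∈ Icc 0 xmax) (hgen : gen F p lam q u φ φd y ≤ 0) :
    gen F p lam q u φt φt' y
      ≤ ((P1 + 2 * lam + q) * xmax + lam * (∫ y', y' ∂F) + ∫ y', p y' 0 ∂F) * ε := by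
  have hε : 0 ≤ ε := (abs_nonneg _).trans hd
  have hP1 : 0 ≤ P1 := hA2.2.2.2.1
  have hval : φ y - φt y ≤ ε * xmax :=
    (le_abs_self _).trans ((abs_sub_comm _ _).trans_le
      ((hclose y hy.2).trans (by rw [abs_of_nonneg hy.1]; gcongr; exact hy.2)))
  have hcmp := gen_le_gen_add (χ' := φd) (K := ∫ y', p y' 0 ∂F + P1 * xmax) hlam hq hε
    (integral_premium_nonneg hF0 hA1 hu hy.1)
    ((integral_premium_le hF0 hA1 hA2 hu hy.1).trans (by gcongr; exact hy.2))
    ((le_abs_self _).trans hd)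
    (integral_comp_sub_retention_sub_le hF0 hmean hφ hφt hε hclose hu hy) hval
  linarith

lemma perturbation_constant_nonneg (hF0 : ∀ᵐ y' ∂F, 0 ≤ y') {P1 : ℝ} (hA1 : AssumptionA1 p)
    (hA2 : AssumptionA2 F p P1) (hlam : 0 ≤ lam) (hq : 0 ≤ q) {xmax : ℝ} (hxmax : 0 ≤ xmax) :
    0 ≤ (P1 + 2 * lam + q) * xmax + lam * (∫ y', y' ∂F) + ∫ y', p y' 0 ∂F := by
  have hP1 : 0 ≤ P1 := hA2.2.2.2.1
  have hEC : 0 ≤ ∫ y', y' ∂F := integral_nonneg_of_ae hF0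
  have hp0 : 0 ≤ ∫ y', p y' 0 ∂F :=
    integral_nonneg_of_ae (hF0.mono fun y' hy' => hA1.1 y' 0 hy' le_rfl)
  positivity

end Generator

theorem polynomial_perturbation_generator_estimate_general
    (F : Measure ℝ) [IsProbabilityMeasure F] (hF : F (Iio 0) = 0)
    (hmean : Integrable (fun y : ℝ => y) F)
    (p : ℝ → ℝ → ℝ) (P1 : ℝ) (hA1 : AssumptionA1 p) (hA2 : AssumptionA2 F p P1)
    (lam q : ℝ) (hlam : 0 < lam) (hq : 0 < q)
    (xmax ε : ℝ)
    (φ φd : ℝ → ℝ) (hφmeas : Measurable φ)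
    (hφgen : ∀ᵐ y ∂(volume.restrict (Icc (0:ℝ) xmax)),
      ∀ u : ℝ → ℝ, IsRetention u → gen F p lam q u φ φd y ≤ 0)
    (φt : ℝ → ℝ) (hφt : ContDiff ℝ 1 φt)
    (hclose : ∀ z : ℝ, z ≤ xmax → |φt z - φ z| ≤ ε * |z|)
    (hdclose : ∀ᵐ y ∂(volume.restrict (Icc (0:ℝ) xmax)), |deriv φt y - φd y| ≤ ε) :
    ∀ᵐ y ∂(volume.restrict (Icc (0:ℝ) xmax)), ∀ u : ℝ → ℝ, IsRetention u →
      gen F p lam q u φt (deriv φt) y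
        ≤ q * (((P1 + 2 * lam + q) * xmax + lam * (∫ y', y' ∂F) + ∫ y', p y' 0 ∂F) / q) * ε ∧
      gen F p lam q u
        (fun z => φt z
          + (((P1 + 2 * lam + q) * xmax + lam * (∫ y', y' ∂F) + ∫ y', p y' 0 ∂F) / q) * ε)
        (deriv (fun z => φt z
          + (((P1 + 2 * lam + q) * xmax + lam * (∫ y', y' ∂F) + ∫ y', p y' 0 ∂F) / q) * ε))
        y ≤ 0 := by
  set C := ((P1 + 2 * lam + q) * xmax + lam * (∫ y', y' ∂F) + ∫ y', p y' 0 ∂F) / q with hC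
  have hF0 : ∀ᵐ y ∂F, 0 ≤ y := by
    rw [ae_iff]
    simp only [not_le]
    exact hF
  have hqC : q * C = (P1 + 2 * lam + q) * xmax + lam * (∫ y', y' ∂F) + ∫ y', p y' 0 ∂F := by
    rw [hC]
    field_simp
  filter_upwards [hφgen, hdclose, ae_restrict_mem measurableSet_Icc] with y hgen hd hy u hu
  have key : gen F p lam q u φt (deriv φt) y ≤ q * C * ε := by
    rw [hqC]
    exact gen_le_of_close hF0 hmean hA1 hA2 hlam.le hq.le hφmeas hφt.continuous.measurable
      hclose hd hu hy (hgen u hu)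
  have hCε : 0 ≤ C * ε := mul_nonneg
    (div_nonneg (perturbation_constant_nonneg hF0 hA1 hA2 hlam.le hq.le (hy.1.trans hy.2)) hq.le)
    ((abs_nonneg _).trans hd)
  refine ⟨key, ?_⟩
  rw [deriv_add_const']
  have hshift := gen_add_const_le (F := F) (p := p) (q := q) (u := u) (y := y) (ψ := φt)
    (ψ' := deriv φt) hlam.le hCε
  linarith

/-- polynomial perturbation estimate of Subsection 5.3.4.  If `φ` is a.e.
differentiable with `𝓛^u φ ≤ 0` a.e. on `[0, x^max]`, and the `C¹` function `φ̃` satisfies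
`|φ̃ − φ| ≤ ε|z|` for `z ≤ x^max` and `|φ̃' − φ'| ≤ ε` a.e. on `[0, x^max]`, then, with
`C = (([p]₁ + 2λ + q) x^max + λ E[C] + ‖p‖₀)/q`, one has `𝓛^u φ̃ ≤ qCε` and
`𝓛^u (φ̃ + Cε) ≤ 0` a.e. on `[0, x^max]`, for every retention policy `u`. -/
theorem polynomial_perturbation_generator_estimate
    (F : Measure ℝ) [IsProbabilityMeasure F] (hF : F (Iio 0) = 0)
    (hmean : Integrable (fun y : ℝ => y) F)
    (p : ℝ → ℝ → ℝ) (P1 : ℝ) (hA1 : AssumptionA1 p) (hA2 : AssumptionA2 F p P1)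
    (lam q : ℝ) (hlam : 0 < lam) (hq : 0 < q)
    (xmax ε : ℝ) (hxmax : 0 < xmax) (hε : 0 < ε)
    (φ φd : ℝ → ℝ) (hφmeas : Measurable φ)
    (hdiff : ∀ᵐ y : ℝ ∂volume, HasDerivAt φ (φd y) y)
    (hφgen : ∀ᵐ y ∂(volume.restrict (Icc (0:ℝ) xmax)),
      ∀ u : ℝ → ℝ, IsRetention u → gen F p lam q u φ φd y ≤ 0)
    (φt : ℝ → ℝ) (hφt : ContDiff ℝ 1 φt)
    (hclose : ∀ z : ℝ, z ≤ xmax → |φt z - φ z| ≤ ε * |z|)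
    (hdclose : ∀ᵐ y ∂(volume.restrict (Icc (0:ℝ) xmax)), |deriv φt y - φd y| ≤ ε) :
    ∀ᵐ y ∂(volume.restrict (Icc (0:ℝ) xmax)), ∀ u : ℝ → ℝ, IsRetention u →
      gen F p lam q u φt (deriv φt) y
        ≤ q * (((P1 + 2 * lam + q) * xmax + lam * (∫ y', y' ∂F) + ∫ y', p y' 0 ∂F) / q) * ε ∧
      gen F p lam q u
        (fun z => φt z
          + (((P1 + 2 * lam + q) * xmax + lam * (∫ y', y' ∂F) + ∫ y', p y' 0 ∂F) / q) * ε)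
        (deriv (fun z => φt z
          + (((P1 + 2 * lam + q) * xmax + lam * (∫ y', y' ∂F) + ∫ y', p y' 0 ∂F) / q) * ε))
        y ≤ 0 :=
  polynomial_perturbation_generator_estimate_general F hF hmean p P1 hA1 hA2 lam q hlam hq xmax ε φ
    φd hφmeas hφgen φt hφt hclose hdclose
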